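/- Generic linear perturbations of a smooth function are Morse: let f : ℝⁿ → ℝ be C^∞. Then for Lebesgue-almost every a ∈ ℝⁿ, the function f_a(x) = f(x) − ⟨a, x⟩ is a Morse function, i.e., every critical point p of f_a (a point with D(f_a)_p = 0) has nondegenerate Hessian D²(f_a)_p. -/

import Mathlib

/-!
A critical point `p` of `f - ⟪a, ·⟫` is a solution of `∇ f p = a`, and its Hessian there is that
of `f`, i.e. the derivative of the gradient map `∇ f : E → E` at `p`. So if `f - ⟪a, ·⟫` has a
degenerate critical point, then `a` is a critical value of `∇ f`, and the critical values of a
differentiable self-map of a finite-dimensional space form a Haar-null set (the easy case of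
Sard's theorem).
-/

open MeasureTheory InnerProductSpace
open scoped Gradient

theorem ContDiff.differentiable_fderiv {𝕜 E F : Type*} [NontriviallyNormedField 𝕜]
    [NormedAddCommGroup E] [NormedSpace 𝕜 E] [NormedAddCommGroup F] [NormedSpace 𝕜 F]
    {f : E → F} (hf : ContDiff 𝕜 2 f) : Differentiable 𝕜 (fderiv 𝕜 f) :=
  (hf.fderiv_right (m := 1) le_rfl).differentiable one_ne_zero

section Morse

variable {E : Type*} [NormedAddCommGroup E] [InnerProductSpace ℝ E]

def IsMorse (g : E → ℝ) : Prop :=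
  ∀ p, fderiv ℝ g p = 0 → ∀ v, (∀ w, fderiv ℝ (fderiv ℝ g) p v w = 0) → v = 0

theorem addHaar_image_setOf_det_fderiv_eq_zero [FiniteDimensional ℝ E] [MeasurableSpace E]
    [BorelSpace E] (μ : Measure E) [μ.IsAddHaarMeasure] {g : E → E} (hg : Differentiable ℝ g) :
    μ (g '' {x | (fderiv ℝ g x).det = 0}) = 0 :=
  addHaar_image_eq_zero_of_det_fderivWithin_eq_zero μ
    (fun x _ => (hg x).hasFDerivAt.hasFDerivWithinAt) fun _ hx => hx

theorem ContinuousLinearMap.eq_zero_of_det_ne_zero [FiniteDimensional ℝ E] {A : E →L[ℝ] E}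
    (hA : A.det ≠ 0) {v : E} (hv : A v = 0) : v = 0 := by
  have hunit : IsUnit (A : E →ₗ[ℝ] E) := (LinearMap.isUnit_iff_isUnit_det _).2 hA.isUnit
  exact ((Module.End.isUnit_iff _).1 hunit).injective (hv.trans (map_zero A).symm)

theorem fderiv_sub_inner {f : E → ℝ} (hf : Differentiable ℝ f) (a : E) :
    fderiv ℝ (fun x => f x - inner ℝ a x) = fun x => fderiv ℝ f x - innerSL ℝ a :=
  funext fun x => ((hf x).hasFDerivAt.sub (innerSL ℝ a).hasFDerivAt).fderiv

variable [CompleteSpace E]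

theorem hasFDerivAt_gradient {f : E → ℝ} {x : E} (hf : DifferentiableAt ℝ (fderiv ℝ f) x) :
    HasFDerivAt (∇ f)
      ((toDual ℝ E).symm.toContinuousLinearEquiv.toContinuousLinearMap ∘L
        fderiv ℝ (fderiv ℝ f) x) x :=
  (toDual ℝ E).symm.toContinuousLinearEquiv.hasFDerivAt.comp x hf.hasFDerivAt

theorem gradient_eq_of_fderiv_eq_innerSL {f : E → ℝ} {a p : E}
    (h : fderiv ℝ f p = innerSL ℝ a) : ∇ f p = a := by
  rw [gradient, h]
  exact (toDual ℝ E).symm_apply_apply a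

theorem isMorse_sub_inner_of_notMem_image [FiniteDimensional ℝ E] {f : E → ℝ}
    (hf : ContDiff ℝ 2 f) {a : E} (ha : a ∉ ∇ f '' {x | (fderiv ℝ (∇ f) x).det = 0}) :
    IsMorse fun x => f x - inner ℝ a x := by
  intro p hp v hv
  rw [fderiv_sub_inner (hf.differentiable two_ne_zero)] at hp hv
  have hpa : ∇ f p = a := gradient_eq_of_fderiv_eq_innerSL (sub_eq_zero.1 hp)
  have hHv : fderiv ℝ (fderiv ℝ f) p v = 0 := by
    ext w
    simpa only [fderiv_sub_const, zero_apply] using hv w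
  refine ContinuousLinearMap.eq_zero_of_det_ne_zero (A := fderiv ℝ (∇ f) p)
    (fun hdet => ha ⟨p, hdet, hpa⟩) ?_
  rw [(hasFDerivAt_gradient (hf.differentiable_fderiv p)).fderiv, ContinuousLinearMap.comp_apply,
    hHv, map_zero]

theorem ae_isMorse_sub_inner [FiniteDimensional ℝ E] [MeasurableSpace E] [BorelSpace E]
    (μ : Measure E) [μ.IsAddHaarMeasure] {f : E → ℝ} (hf : ContDiff ℝ 2 f) :
    ∀ᵐ a ∂μ, IsMorse fun x => f x - inner ℝ a x := by
  have hgrad : Differentiable ℝ (∇ f) := fun x =>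
    (hasFDerivAt_gradient (hf.differentiable_fderiv x)).differentiableAt
  filter_upwards [measure_eq_zero_iff_ae_notMem.1 (addHaar_image_setOf_det_fderiv_eq_zero μ hgrad)]
    with a ha using isMorse_sub_inner_of_notMem_image hf ha

end Morse

/-- For a smooth function `f : ℝⁿ → ℝ`, almost every linear perturbation
`x ↦ f x - ⟨a, x⟩` is a Morse function: every critical point has nondegenerate
Hessian. -/
theorem generic_linear_perturbation_is_morse
    {n : ℕ} (f : EuclideanSpace ℝ (Fin n) → ℝ) (hf : ContDiff ℝ (⊤ : ℕ∞) f) :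
    ∀ᵐ a : EuclideanSpace ℝ (Fin n) ∂volume,
      ∀ p : EuclideanSpace ℝ (Fin n),
        fderiv ℝ (fun x => f x - (inner ℝ a x : ℝ)) p = 0 →
        ∀ v : EuclideanSpace ℝ (Fin n),
          (∀ w : EuclideanSpace ℝ (Fin n),
            fderiv ℝ (fderiv ℝ (fun x => f x - (inner ℝ a x : ℝ))) p v w = 0) → v = 0 :=
  ae_isMorse_sub_inner volume (hf.of_le (WithTop.coe_le_coe.2 le_top))
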